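/- arXiv:2304.03154 — 2 statements merged into one kernel-verified Lean document; each statement's English description precedes it below -/
import Mathlib

section
/- Let f be a monic quartic Eisenstein polynomial over 𝒪_K such that the Galois closure group of L_f/K is isomorphic to S₄ or A₄ (equivalently, f has exactly one root in L_f). Let π be the image of X in L_f = K[X]/(f), and let σ₁, σ₂, σ₃, σ₄ be the four K-embeddings of L_f into a fixed algebraic closure of K, with σ₁ the identity. Then the three valuations v_K(σ_i(π) − π) for i = 2, 3, 4 are all equal. -/
open scoped Classical
open IntermediateField

noncomputable section

/-- The maximal ideal of a (local) commutative ring, defined as the Jacobson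
radical of the zero ideal; for a local ring this is the maximal ideal. -/
def maxIdl (R : Type*) [CommRing R] : Ideal R := (⊥ : Ideal R).jacobson

/-- The valuation of an ideal of a discrete valuation ring: the largest `n`
such that `I ⊆ 𝔪ⁿ`. -/
def idealVal {R : Type*} [CommRing R] (I : Ideal R) : ℕ :=
  sSup {n : ℕ | I ≤ maxIdl R ^ n}

/-- Any field extension of `ℚ₂` is a `ℤ₂`-algebra. -/
instance algZ2 (F : Type*) [Field F] [Algebra ℚ_[2] F] : Algebra ℤ_[2] F :=
  ((algebraMap ℚ_[2] F).comp (algebraMap ℤ_[2] ℚ_[2])).toAlgebra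

instance istZ2 (K L : Type*) [Field K] [Field L] [Algebra ℚ_[2] K] [Algebra ℚ_[2] L]
    [Algebra K L] [IsScalarTower ℚ_[2] K L] : IsScalarTower ℤ_[2] K L :=
  IsScalarTower.of_algebraMap_eq fun x => by
    show algebraMap ℚ_[2] L (algebraMap ℤ_[2] ℚ_[2] x)
        = algebraMap K L (algebraMap ℚ_[2] K (algebraMap ℤ_[2] ℚ_[2] x))
    rw [← IsScalarTower.algebraMap_apply ℚ_[2] K L]

/-- The ring of integers of a `2`-adic field: the integral closure of `ℤ₂`. -/
abbrev OK (F : Type*) [Field F] [Algebra ℚ_[2] F] : Type _ :=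
  ↥(integralClosure ℤ_[2] F)

/-- The inclusion of rings of integers induced by an extension of 2-adic fields. -/
instance okAlgebra (K L : Type*) [Field K] [Field L] [Algebra ℚ_[2] K] [Algebra ℚ_[2] L]
    [Algebra K L] [IsScalarTower ℚ_[2] K L] : Algebra (OK K) (OK L) :=
  RingHom.toAlgebra
    { toFun := fun x => ⟨algebraMap K L x,
        IsIntegral.map (IsScalarTower.toAlgHom ℤ_[2] K L) x.2⟩
      map_one' := Subtype.ext (by simp)
      map_mul' := fun a b => Subtype.ext (by push_cast; simp)
      map_zero' := Subtype.ext (by simp)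
      map_add' := fun a b => Subtype.ext (by push_cast; simp) }

variable (K : Type) [Field K] [Algebra ℚ_[2] K]

/-- The residue cardinality `q` of a 2-adic field. -/
def resCard : ℕ := Nat.card (OK K ⧸ maxIdl (OK K))

/-- The absolute ramification index `e(K/ℚ₂)`, i.e. `v_K(2)`. -/
def eRam : ℕ := idealVal (Ideal.span {(2 : OK K)})

/-- The absolute inertia degree `f(K/ℚ₂)`. -/
def fInertia : ℕ :=
  Ideal.inertiaDeg' (maxIdl ℤ_[2]) (maxIdl (OK K))

/-- The discriminant ideal of an extension of 2-adic fields: the ideal of `𝒪_K`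
generated by the discriminants of all `[L:K]`-tuples of integral elements. -/
def discIdl (K L : Type*) [Field K] [Field L] [Algebra ℚ_[2] K] [Algebra ℚ_[2] L]
    [Algebra K L] [IsScalarTower ℚ_[2] K L] : Ideal (OK K) :=
  Ideal.span (Set.range fun b : Fin (Module.finrank K L) → OK L => Algebra.discr (OK K) b)

/-- `L/K` is a totally ramified quartic extension. -/
def IsTotRamQuartic (L : IntermediateField K (AlgebraicClosure K)) : Prop :=
  Module.finrank K L = 4 ∧
    Ideal.ramificationIdx' (maxIdl (OK K)) (maxIdl (OK L)) = 4

/-- The Galois closure group of `L/K` is isomorphic to `G`. -/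
def GalClosureGrpIso (L : IntermediateField K (AlgebraicClosure K)) (G : Type*) [Group G] : Prop :=
  Nonempty ((↥(normalClosure K L (AlgebraicClosure K)) ≃ₐ[K]
      ↥(normalClosure K L (AlgebraicClosure K))) ≃* G)

variable [FiniteDimensional ℚ_[2] K]

/-- `Σ_m^G`: totally ramified quartic extensions of `K` with discriminant
valuation `m` and Galois closure group `G`, inside a fixed algebraic closure. -/
def SigmaGm (G : Type*) [Group G] (m : ℤ) : Set (IntermediateField K (AlgebraicClosure K)) :=
  {L | IsTotRamQuartic K L ∧ (idealVal (discIdl K L) : ℤ) = m ∧ GalClosureGrpIso K L G}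

/-- `Σ^G`: totally ramified quartic extensions of `K` with Galois closure group `G`. -/
def SigmaG (G : Type*) [Group G] : Set (IntermediateField K (AlgebraicClosure K)) :=
  {L | IsTotRamQuartic K L ∧ GalClosureGrpIso K L G}

/-- The setoid identifying `K`-isomorphic extensions. -/
def extSetoid (S : Set (IntermediateField K (AlgebraicClosure K))) : Setoid S where
  r L L' := Nonempty (↥L.1 ≃ₐ[K] ↥L'.1)
  iseqv := ⟨fun _ => ⟨AlgEquiv.refl⟩, fun ⟨e⟩ => ⟨e.symm⟩, fun ⟨e⟩ ⟨f⟩ => ⟨e.trans f⟩⟩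

/-- The number of isomorphism classes of extensions in `S`. -/
def countClasses (S : Set (IntermediateField K (AlgebraicClosure K))) : ℕ :=
  Nat.card (Quotient (extSetoid K S))

/-- The mass `m̃(S) = ∑_{L ∈ S} (#Aut(L/K))⁻¹ q^{-v_K(d_{L/K})}`, the sum ranging
over isomorphism classes of extensions in `S`. -/
def massOf (S : Set (IntermediateField K (AlgebraicClosure K))) : ℚ :=
  ∑ᶠ c : Quotient (extSetoid K S),
    (Nat.card (↥(Quotient.out c).1 ≃ₐ[K] ↥(Quotient.out c).1) : ℚ)⁻¹ *
      (resCard K : ℚ) ^ (-(idealVal (discIdl K (Quotient.out c).1) : ℤ))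

/-- The field `K(√-1)` inside the algebraic closure. -/
def sqrtNeg1Fld : IntermediateField K (AlgebraicClosure K) :=
  IntermediateField.adjoin K {x : AlgebraicClosure K | x ^ 2 = -1}

/-- `d₍₋₁₎ = v_K(d_{K(√-1)/K})`. -/
def dNeg1 : ℕ := idealVal (discIdl K (sqrtNeg1Fld K))

/-- The indicator function of a proposition. -/
def ind (P : Prop) : ℚ := if P then 1 else 0

end

noncomputable section

/-- The valuation on the algebraic closure of a 2-adic field `K`, normalised so that a
uniformiser of `K` has valuation `1` (and with `v(0) = ⊤`): for algebraic `x` it is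
`e(K/ℚ₂) · v_{ℚ₂}(N(x)) / deg(x)`, computed via the minimal polynomial over `ℚ₂`. -/
def vOmega (K : Type) [Field K] [Algebra ℚ_[2] K] (x : AlgebraicClosure K) : WithTop ℚ :=
  if x = 0 then ⊤
  else (((eRam K : ℚ) * (Padic.valuation ((minpoly ℚ_[2] x).coeff 0) : ℚ) /
      ((minpoly ℚ_[2] x).natDegree : ℚ) : ℚ) : WithTop ℚ)

/-- The normalised valuation `v_K` on a 2-adic field `K`, with `v_K(0) = ⊤`. -/
def vElem (K : Type) [Field K] [Algebra ℚ_[2] K] (x : K) : WithTop ℚ :=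
  vOmega K (algebraMap K (AlgebraicClosure K) x)

end

/-! The Galois group of the normal closure of `K⟮r⟯` has order at least 12, while adjoining the
roots of a degree `d` polynomial one at a time bounds the degree of its splitting field by `d!`.
Hence `minpoly K r` has degree 4 (degree at most 3 would give at most 6), and its cofactor
`minpoly K r / (X - r)` over `K⟮r⟯` is an irreducible cubic: a root in `K⟮r⟯` would leave a
quadratic and bound the degree by `4 · 2 = 8`. So `s` and `t` are conjugate over `K⟮r⟯`; an
automorphism of the algebraic closure fixing `K⟮r⟯` and sending `t` to `s` sends `t - r` to
`s - r`, so both have the same minimal polynomial over `ℚ₂`, which determines `vOmega`. -/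

open Polynomial IntermediateField Module
open scoped Nat

universe u

section RootAdjunction

variable {F Ω : Type*} [Field F] [Field Ω] [Algebra F Ω]

theorem aeval_divByMonic_X_sub_C_eq_zero {q : F[X]} {a : F} (ha : q.IsRoot a) {x : Ω}
    (hx : aeval x q = 0) (hxa : x ≠ algebraMap F Ω a) : aeval x (q /ₘ (X - C a)) = 0 := by
  rw [← mul_divByMonic_eq_iff_isRoot.2 ha, map_mul] at hx
  simpa [sub_eq_zero, hxa] using hx

theorem rootSet_subset_insert_rootSet_divByMonic {q : F[X]} {a : F} (ha : q.IsRoot a) :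
    q.rootSet Ω ⊆ insert (algebraMap F Ω a) ((q /ₘ (X - C a)).rootSet Ω) := by
  intro x hx
  obtain ⟨hq, hxq⟩ := mem_rootSet.1 hx
  by_cases hxa : x = algebraMap F Ω a
  · exact .inl hxa
  refine .inr (mem_rootSet.2 ⟨fun h => hq ?_, aeval_divByMonic_X_sub_C_eq_zero ha hxq hxa⟩)
  rw [← mul_divByMonic_eq_iff_isRoot.2 ha, h, mul_zero]

theorem adjoin_rootSet_le_adjoin_rootSet_divByMonic {q : F[X]} {a : F} (ha : q.IsRoot a) :
    adjoin F (q.rootSet Ω) ≤ adjoin F ((q /ₘ (X - C a)).rootSet Ω) :=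
  adjoin_le_iff.2 <| (rootSet_subset_insert_rootSet_divByMonic ha).trans <|
    Set.insert_subset (IntermediateField.algebraMap_mem _ a) (subset_adjoin _ _)

instance finiteDimensional_adjoin_rootSet (q : F[X]) :
    FiniteDimensional F (adjoin F (q.rootSet Ω)) :=
  finiteDimensional_adjoin fun _ hx =>
    (mem_rootSet.1 hx).elim fun hq h => IsAlgebraic.isIntegral ⟨q, hq, h⟩

theorem isRoot_map_gen {q : F[X]} {a : Ω} (ha : aeval a q = 0) :
    (q.map (algebraMap F F⟮a⟯)).IsRoot (AdjoinSimple.gen F a) := by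
  rw [IsRoot.def, eval_map_algebraMap, ← Subtype.coe_inj, AdjoinSimple.coe_aeval_gen_apply]
  exact ha

theorem adjoin_rootSet_le_restrictScalars (q : F[X]) (a : Ω) :
    adjoin F (q.rootSet Ω) ≤
      (adjoin F⟮a⟯ ((q.map (algebraMap F F⟮a⟯)).rootSet Ω)).restrictScalars F := by
  rw [adjoin_le_iff]
  intro x hx
  rw [coe_restrictScalars]
  apply subset_adjoin
  rwa [rootSet_def, aroots_map]

theorem finrank_adjoin_rootSet_le_mul {q : F[X]} {a : Ω} (ha : a ∈ q.rootSet Ω) :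
    finrank F (adjoin F (q.rootSet Ω)) ≤ (minpoly F a).natDegree *
      finrank F⟮a⟯ (adjoin F⟮a⟯ ((q.map (algebraMap F F⟮a⟯) /ₘ
        (X - C (AdjoinSimple.gen F a))).rootSet Ω)) := by
  obtain ⟨hq, hqa⟩ := mem_rootSet.1 ha
  have hint : IsIntegral F a := IsAlgebraic.isIntegral ⟨q, hq, hqa⟩
  let E := adjoin F⟮a⟯ ((q.map (algebraMap F F⟮a⟯)).rootSet Ω)
  have : FiniteDimensional F F⟮a⟯ := adjoin.finiteDimensional hint
  have : FiniteDimensional F (E.restrictScalars F) := FiniteDimensional.trans F F⟮a⟯ E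
  calc finrank F (adjoin F (q.rootSet Ω))
      ≤ finrank F (E.restrictScalars F) :=
        finrank_le_of_le_right (adjoin_rootSet_le_restrictScalars q a)
    _ = (minpoly F a).natDegree * finrank F⟮a⟯ E := by
        rw [← adjoin.finrank hint]
        have : Module.Free F⟮a⟯ E := .of_divisionRing _ _
        exact (finrank_mul_finrank F F⟮a⟯ E).symm
    _ ≤ _ := Nat.mul_le_mul_left _ <|
        finrank_le_of_le_right (adjoin_rootSet_le_adjoin_rootSet_divByMonic (isRoot_map_gen hqa))

end RootAdjunction

theorem finrank_adjoin_rootSet_le_factorial {F Ω : Type u} [Field F] [Field Ω] [Algebra F Ω]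
    (q : F[X]) : finrank F (adjoin F (q.rootSet Ω)) ≤ q.natDegree ! := by
  obtain ⟨n, hn⟩ : ∃ n, q.natDegree = n := ⟨_, rfl⟩
  rw [hn]
  induction n using Nat.strong_induction_on generalizing F q with
  | _ n ih =>
  rcases (q.rootSet Ω).eq_empty_or_nonempty with hempty | ⟨a, ha⟩
  · rw [hempty, adjoin_empty, IntermediateField.finrank_bot]
    exact Nat.factorial_pos n
  obtain ⟨hq, hqa⟩ := mem_rootSet.1 ha
  have hint : IsIntegral F a := IsAlgebraic.isIntegral ⟨q, hq, hqa⟩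
  have hdeg : (minpoly F a).natDegree ≤ n :=
    hn ▸ natDegree_le_of_dvd (minpoly.dvd F a hqa) hq
  have hpos : 0 < (minpoly F a).natDegree := minpoly.natDegree_pos hint
  calc _ ≤ _ := finrank_adjoin_rootSet_le_mul ha
    _ ≤ n * (n - 1)! := by
        refine Nat.mul_le_mul hdeg (ih (n - 1) (by omega) _ ?_)
        rw [natDegree_divByMonic _ (monic_X_sub_C _), natDegree_map, natDegree_X_sub_C, hn]
    _ = n ! := Nat.mul_factorial_pred (by omega)

section NormalClosure

variable {K Ω : Type u} [Field K] [Field Ω] [Algebra K Ω] [IsAlgClosure K Ω] {r : Ω}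

theorem normalClosure_adjoin_simple_le_adjoin_rootSet (hr : IsIntegral K r) :
    normalClosure K K⟮r⟯ Ω ≤ adjoin K ((minpoly K r).rootSet Ω) := by
  have := IsAlgClosure.isAlgClosed K (K := Ω)
  have : Normal K (adjoin K ((minpoly K r).rootSet Ω)) :=
    Normal.of_isSplittingField (hFEp := adjoin_rootSet_isSplittingField (IsAlgClosed.splits _))
  rw [normalClosure_le_iff_of_normal, adjoin_simple_le_iff]
  exact subset_adjoin _ _ ((isConjRoot_iff_mem_minpoly_rootSet hr).1 (IsConjRoot.refl))

theorem four_le_natDegree_minpoly (hr : IsIntegral K r)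
    (h6 : 6 < finrank K (normalClosure K K⟮r⟯ Ω)) : 4 ≤ (minpoly K r).natDegree := by
  by_contra! h
  have h3 : (minpoly K r).natDegree ! ≤ 6 := Nat.factorial_le (Nat.le_of_lt_succ h)
  have hle := (finrank_le_of_le_right (normalClosure_adjoin_simple_le_adjoin_rootSet hr)).trans
    (finrank_adjoin_rootSet_le_factorial (minpoly K r) (Ω := Ω))
  omega

theorem irreducible_minpoly_map_divByMonic (hr : IsIntegral K r)
    (h4 : (minpoly K r).natDegree = 4) (h8 : 8 < finrank K (normalClosure K K⟮r⟯ Ω)) :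
    Irreducible ((minpoly K r).map (algebraMap K K⟮r⟯) /ₘ (X - C (AdjoinSimple.gen K r))) := by
  set g := (minpoly K r).map (algebraMap K K⟮r⟯) /ₘ (X - C (AdjoinSimple.gen K r)) with hg
  have hg3 : g.natDegree = 3 := by
    rw [hg, natDegree_divByMonic _ (monic_X_sub_C _), natDegree_map, natDegree_X_sub_C, h4]
  refine irreducible_of_degree_le_three_of_not_isRoot (by simp [hg3]) fun b hb => h8.not_ge ?_
  calc finrank K (normalClosure K K⟮r⟯ Ω)
      ≤ finrank K (adjoin K ((minpoly K r).rootSet Ω)) :=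
        finrank_le_of_le_right (normalClosure_adjoin_simple_le_adjoin_rootSet hr)
    _ ≤ 4 * finrank K⟮r⟯ (adjoin K⟮r⟯ (g.rootSet Ω)) :=
        h4 ▸ finrank_adjoin_rootSet_le_mul ((isConjRoot_iff_mem_minpoly_rootSet hr).1 .refl)
    _ ≤ 4 * finrank K⟮r⟯ (adjoin K⟮r⟯ ((g /ₘ (X - C b)).rootSet Ω)) :=
        Nat.mul_le_mul_left _ <|
          finrank_le_of_le_right (adjoin_rootSet_le_adjoin_rootSet_divByMonic hb)
    _ ≤ 4 * (g /ₘ (X - C b)).natDegree ! :=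
        Nat.mul_le_mul_left _ (finrank_adjoin_rootSet_le_factorial _)
    _ = 8 := by rw [natDegree_divByMonic _ (monic_X_sub_C _), hg3, natDegree_X_sub_C]; rfl

theorem minpoly_adjoin_eq_minpoly_map_divByMonic (hr : IsIntegral K r)
    (h4 : (minpoly K r).natDegree = 4) (h8 : 8 < finrank K (normalClosure K K⟮r⟯ Ω))
    {s : Ω} (hs : aeval s (minpoly K r) = 0) (hsr : s ≠ r) :
    minpoly K⟮r⟯ s = (minpoly K r).map (algebraMap K K⟮r⟯) /ₘ (X - C (AdjoinSimple.gen K r)) := by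
  refine (minpoly.eq_of_irreducible_of_monic (irreducible_minpoly_map_divByMonic hr h4 h8)
    (aeval_divByMonic_X_sub_C_eq_zero (isRoot_map_gen (minpoly.aeval K r))
      (by rwa [aeval_map_algebraMap]) hsr) ?_).symm
  rw [Monic, leadingCoeff_divByMonic_X_sub_C _
    (by simp [degree_eq_natDegree (minpoly.ne_zero hr), h4])]
  exact (minpoly.monic hr).map _

end NormalClosure

theorem minpoly_sub_eq_of_minpoly_adjoin_eq {F K Ω : Type*} [Field F] [Field K] [Field Ω]
    [Algebra F K] [Algebra K Ω] [Algebra F Ω] [IsScalarTower F K Ω] {r s t : Ω} [Normal K⟮r⟯ Ω]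
    (h : minpoly K⟮r⟯ s = minpoly K⟮r⟯ t) : minpoly F (s - r) = minpoly F (t - r) := by
  obtain ⟨σ, hσt⟩ := IsConjRoot.exists_algEquiv (isConjRoot_def.mpr h)
  have hσr : σ r = r := σ.commutes (AdjoinSimple.gen K r)
  have hσ : σ (t - r) = s - r := by rw [map_sub, hσt, hσr]
  rw [← hσ]
  exact minpoly.algEquiv_eq ((σ.restrictScalars K).restrictScalars F) (t - r)

theorem twelve_le_card_of_nonempty_mulEquiv {G : Type*} [Group G]
    (h : Nonempty (G ≃* Equiv.Perm (Fin 4)) ∨ Nonempty (G ≃* alternatingGroup (Fin 4))) :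
    12 ≤ Nat.card G := by
  rcases h with ⟨⟨e⟩⟩ | ⟨⟨e⟩⟩
  · rw [Nat.card_congr e.toEquiv, Nat.card_perm]
    simp [Nat.factorial]
  · rw [Nat.card_congr e.toEquiv, Nat.card_eq_fintype_card, card_alternatingGroup]
    simp [Nat.factorial]

theorem lem_1_aut_implies_eq_vals_general (K : Type) [Field K] [Algebra ℚ_[2] K]
    (f : Polynomial (OK K)) (hmon : f.Monic) (hdeg : f.natDegree = 4)
    (r : AlgebraicClosure K)
    (hr : Polynomial.aeval r (f.map (algebraMap (OK K) K)) = 0)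
    (hgal : GalClosureGrpIso K K⟮r⟯ (Equiv.Perm (Fin 4)) ∨
      GalClosureGrpIso K K⟮r⟯ ↥(alternatingGroup (Fin 4)))
    (s t : AlgebraicClosure K)
    (hs : Polynomial.aeval s (f.map (algebraMap (OK K) K)) = 0) (hsr : s ≠ r)
    (ht : Polynomial.aeval t (f.map (algebraMap (OK K) K)) = 0) (htr : t ≠ r) :
    vOmega K (s - r) = vOmega K (t - r) := by
  have : CharZero K := charZero_of_injective_algebraMap (algebraMap ℚ_[2] K).injective
  have hrint : IsIntegral K r := Algebra.IsIntegral.isIntegral r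
  have : FiniteDimensional K K⟮r⟯ := adjoin.finiteDimensional hrint
  have h12 : 12 ≤ finrank K (normalClosure K K⟮r⟯ (AlgebraicClosure K)) :=
    IsGalois.card_aut_eq_finrank K (normalClosure K K⟮r⟯ (AlgebraicClosure K)) ▸
      twelve_le_card_of_nonempty_mulEquiv hgal
  have hm : minpoly K r = f.map (algebraMap (OK K) K) :=
    (eq_of_monic_of_dvd_of_natDegree_le (minpoly.monic hrint) (hmon.map _) (minpoly.dvd K r hr)
      (by rw [hmon.natDegree_map, hdeg]; exact four_le_natDegree_minpoly hrint (by omega))).symm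
  have h4 : (minpoly K r).natDegree = 4 := by rw [hm, hmon.natDegree_map, hdeg]
  have hst : minpoly K⟮r⟯ s = minpoly K⟮r⟯ t := by
    rw [minpoly_adjoin_eq_minpoly_map_divByMonic hrint h4 (by omega) (hm ▸ hs) hsr,
      minpoly_adjoin_eq_minpoly_map_divByMonic hrint h4 (by omega) (hm ▸ ht) htr]
  simp only [vOmega, if_neg (sub_ne_zero.2 hsr), if_neg (sub_ne_zero.2 htr),
    minpoly_sub_eq_of_minpoly_adjoin_eq (F := ℚ_[2]) hst]

/-- Lemma 2.3 (Monnet): if `f` is a monic quartic Eisenstein polynomial over `𝒪_K` whose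
root field has Galois closure group `S₄` or `A₄`, then the valuations of the differences
of the conjugates of a root `r` with `r` itself are all equal. -/
theorem lem_1_aut_implies_eq_vals (K : Type) [Field K] [Algebra ℚ_[2] K]
    [FiniteDimensional ℚ_[2] K]
    (f : Polynomial (OK K)) (hmon : f.Monic) (hdeg : f.natDegree = 4)
    (heis : f.IsEisensteinAt (maxIdl (OK K)))
    (r : AlgebraicClosure K)
    (hr : Polynomial.aeval r (f.map (algebraMap (OK K) K)) = 0)
    (hgal : GalClosureGrpIso K K⟮r⟯ (Equiv.Perm (Fin 4)) ∨
      GalClosureGrpIso K K⟮r⟯ ↥(alternatingGroup (Fin 4)))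
    (s t : AlgebraicClosure K)
    (hs : Polynomial.aeval s (f.map (algebraMap (OK K) K)) = 0) (hsr : s ≠ r)
    (ht : Polynomial.aeval t (f.map (algebraMap (OK K) K)) = 0) (htr : t ≠ r) :
    vOmega K (s - r) = vOmega K (t - r) :=
  lem_1_aut_implies_eq_vals_general K f hmon hdeg r hr hgal s t hs hsr ht htr
end

section
/- Let E = K(√d) for d ∈ K^× \ K^{×2} and let L = E(√α) for α ∈ E^× \ E^{×2}. Then the Galois closure group of L/K is isomorphic to V₄ if N_{E/K}(α) ∈ K^{×2}; isomorphic to C₄ if N_{E/K}(α) ∈ d·K^{×2}; and isomorphic to D₄ otherwise. -/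
/-!
Write `x = √d`, `y = √α`, and let `Φ` be a `K`-automorphism of the algebraic closure with
`Φ x = -x`. Then `N(α) = α · Φ α`, and every `K`-automorphism sends `x` to `±x` and `y` to `±y` or
`±Φ y`, so the Galois closure of `L = K(x, y)` is `K(x, y, Φ y)`.
If `N(α) = c²` or `N(α) = d c²`, then `y · Φ y = ±c` resp. `±c x`, so `Φ y ∈ L` and `L/K` is Galois
of degree 4; in the first case every automorphism is an involution, in the second `Φ² y = -y`, so
`Φ` has order 4. Otherwise `Φ α` is not a square in `L`, the closure has degree 8, and the
automorphisms `r : x ↦ -x, y ↦ Φ y ↦ -y` and `s` fixing `L` with `Φ y ↦ -Φ y` satisfy the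
relations of `D₄`.
-/

open scoped Classical
set_option synthInstance.maxHeartbeats 1000000
set_option maxHeartbeats 1000000
open IntermediateField

open Polynomial

section GroupRecognition

variable {G : Type*} [Group G]

theorem IsKleinFour.of_card_eq_four (hcard : Nat.card G = 4) (hsq : ∀ g : G, g ^ 2 = 1) :
    IsKleinFour G := by
  have : Finite G := Nat.finite_of_card_ne_zero (by omega)
  have : Nontrivial G := Finite.one_lt_card_iff_nontrivial.mp (by omega)
  exact ⟨hcard, (Monoid.exponent_eq_prime_iff Nat.prime_two).mpr
    fun g hg => orderOf_eq_prime (hsq g) hg⟩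

theorem nonempty_mulEquiv_zmod_of_pow_ne_one {p k : ℕ} [hp : Fact p.Prime]
    (hcard : Nat.card G = p ^ (k + 1)) {g : G} (hg : g ^ p ^ k ≠ 1) :
    Nonempty (G ≃* Multiplicative (ZMod (p ^ (k + 1)))) := by
  have : Finite G := Nat.finite_of_card_ne_zero (by simp [hcard, hp.out.ne_zero])
  have hord : orderOf g = Nat.card G :=
    hcard ▸ orderOf_eq_prime_pow hg (hcard ▸ pow_card_eq_one')
  exact ⟨(hcard ▸ zmodCyclicMulEquiv (isCyclic_of_orderOf_eq_card g hord)).symm⟩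

theorem nonempty_mulEquiv_dihedralGroup {n : ℕ} [NeZero n] (hcard : Nat.card G = 2 * n)
    {r s : G} (hr : orderOf r = n) (hs : s ^ 2 = 1) (hrs : (r * s) ^ 2 = 1)
    (hsr : s ∉ Subgroup.zpowers r) : Nonempty (G ≃* DihedralGroup n) := by
  have : Finite G := Nat.finite_of_card_ne_zero (by simp [hcard, NeZero.ne n])
  set ρ : ZMod n → G := fun i => r ^ i.val
  have ρ_add (i j : ZMod n) : ρ (i + j) = ρ i * ρ j := by
    simp only [ρ, ← pow_add, ZMod.val_add, ← hr, pow_mod_orderOf]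
  have ρ_neg (i : ZMod n) : ρ (-i) = (ρ i)⁻¹ :=
    eq_inv_of_mul_eq_one_left (by rw [← ρ_add, neg_add_cancel]; simp [ρ])
  have hs_inv : s⁻¹ = s := inv_eq_of_mul_eq_one_right (by rw [← sq, hs])
  have hsr_semiconj : SemiconjBy s r⁻¹ r := by
    have h := inv_eq_of_mul_eq_one_right (show r * s * (r * s) = 1 by rw [← sq, hrs])
    rwa [mul_inv_rev, hs_inv] at h
  have hρs (i : ZMod n) : ρ i * s = s * ρ (-i) := by
    simp only [ρ_neg, ρ, ← inv_pow]
    exact (hsr_semiconj.pow_right _).symm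
  let f : DihedralGroup n →* G :=
    { toFun := fun
        | .r i => ρ i
        | .sr i => s * ρ i
      map_one' := by show ρ 0 = 1; simp [ρ]
      map_mul' := by
        rintro (i | i) (j | j)
        · exact ρ_add i j
        · show s * ρ (j - i) = ρ i * (s * ρ j)
          rw [← mul_assoc, hρs, mul_assoc, ← ρ_add, neg_add_eq_sub]
        · show s * ρ (i + j) = s * ρ i * ρ j
          rw [mul_assoc, ρ_add]
        · show ρ (j - i) = s * ρ i * (s * ρ j)
          rw [mul_assoc, ← mul_assoc (ρ i), hρs, ← mul_assoc, ← mul_assoc, ← sq, hs, one_mul,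
            ← ρ_add, neg_add_eq_sub] }
  have hf : Function.Injective f := by
    refine (injective_iff_map_eq_one f).mpr ?_
    rintro (i | i) h
    · change r ^ i.val = 1 at h
      rw [← orderOf_dvd_iff_pow_eq_one, hr] at h
      rw [DihedralGroup.one_def, (ZMod.val_eq_zero i).mp (Nat.eq_zero_of_dvd_of_lt h i.val_lt)]
    · change s * r ^ i.val = 1 at h
      refine (hsr ?_).elim
      rw [eq_inv_of_mul_eq_one_left h]
      exact inv_mem (pow_mem (Subgroup.mem_zpowers r) _)
  exact ⟨(MulEquiv.ofBijective f ((Nat.bijective_iff_injective_and_card f).mpr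
    ⟨hf, by rw [DihedralGroup.nat_card, hcard]⟩)).symm⟩

end GroupRecognition

section Quadratic

variable {k Ω : Type*} [Field k] [Field Ω] [Algebra k Ω] {c : k} {z : Ω}

theorem isIntegral_of_sq_eq_algebraMap (hz : z ^ 2 = algebraMap k Ω c) : IsIntegral k z :=
  ⟨X ^ 2 - C c, monic_X_pow_sub_C c two_ne_zero, by simp [hz]⟩

theorem ne_zero_of_sq_eq_algebraMap (hz : z ^ 2 = algebraMap k Ω c) (hc : ¬IsSquare c) :
    z ≠ 0 := by
  rintro rfl
  exact hc ⟨0, FaithfulSMul.algebraMap_injective k Ω (by simp [← hz])⟩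

theorem minpoly_eq_X_sq_sub_C (hz : z ^ 2 = algebraMap k Ω c) (hc : ¬IsSquare c) :
    minpoly k z = X ^ 2 - C c :=
  (minpoly.eq_of_irreducible_of_monic
    (X_pow_sub_C_irreducible_of_prime Nat.prime_two fun b hb => hc ⟨b, by rw [← hb, sq]⟩)
    (by simp [hz]) (monic_X_pow_sub_C c two_ne_zero)).symm

theorem finrank_adjoin_of_sq_eq_algebraMap (hz : z ^ 2 = algebraMap k Ω c) (hc : ¬IsSquare c) :
    Module.finrank k k⟮z⟯ = 2 := by
  rw [adjoin.finrank (isIntegral_of_sq_eq_algebraMap hz), minpoly_eq_X_sq_sub_C hz hc,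
    natDegree_X_pow_sub_C]

theorem exists_eq_add_mul_of_mem_adjoin (hz : z ^ 2 = algebraMap k Ω c) (hc : ¬IsSquare c)
    {w : Ω} (hw : w ∈ k⟮z⟯) : ∃ a b : k, w = algebraMap k Ω a + algebraMap k Ω b * z := by
  let pb := adjoin.powerBasis (isIntegral_of_sq_eq_algebraMap hz)
  have hdim : pb.dim = 2 := by
    rw [adjoin.powerBasis_dim, minpoly_eq_X_sq_sub_C hz hc, natDegree_X_pow_sub_C]
  obtain ⟨f, hf, hfw⟩ := pb.exists_eq_aeval ⟨w, hw⟩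
  rw [eq_X_add_C_of_natDegree_le_one (p := f) (by omega)] at hfw
  refine ⟨f.coeff 0, f.coeff 1, ?_⟩
  simpa [pb, add_comm] using congrArg Subtype.val hfw

theorem mem_range_or_mem_range_mul_of_sq_eq (h2 : (2 : k) ≠ 0) (hz : z ^ 2 = algebraMap k Ω c)
    (hc : ¬IsSquare c) {w : Ω} (hw : w ∈ k⟮z⟯) {e : k} (hwe : w ^ 2 = algebraMap k Ω e) :
    (∃ a, w = algebraMap k Ω a) ∨ ∃ b, w = algebraMap k Ω b * z := by
  obtain ⟨a, b, rfl⟩ := exists_eq_add_mul_of_mem_adjoin hz hc hw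
  rcases eq_or_ne b 0 with rfl | hb
  · exact .inl ⟨a, by simp⟩
  rcases eq_or_ne a 0 with rfl | ha
  · exact .inr ⟨b, by simp⟩
  -- otherwise the cross term `2ab z` of `w ^ 2` would put `z` in `k`
  have hzk : z = algebraMap k Ω ((e - a ^ 2 - b ^ 2 * c) / (2 * a * b)) := by
    have : algebraMap k Ω (2 * a * b) ≠ 0 := by simp [h2, ha, hb]
    rw [map_div₀, eq_div_iff this]
    simp only [map_sub, map_mul, map_pow, map_ofNat] at this ⊢
    linear_combination hwe - (algebraMap k Ω b) ^ 2 * hz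
  refine absurd ⟨(e - a ^ 2 - b ^ 2 * c) / (2 * a * b), ?_⟩ hc
  apply FaithfulSMul.algebraMap_injective k Ω
  rw [← sq, map_pow, ← hzk, hz]

theorem AlgEquiv.apply_eq_or_eq_neg_of_sq_eq (g : Ω ≃ₐ[k] Ω) (hz : z ^ 2 = algebraMap k Ω c) :
    g z = z ∨ g z = -z :=
  sq_eq_sq_iff_eq_or_eq_neg.mp (by rw [← map_pow, hz, g.commutes])

theorem exists_algEquiv_apply_eq_neg [Normal k Ω] (hz : z ^ 2 = algebraMap k Ω c)
    (hc : ¬IsSquare c) : ∃ σ : Gal(Ω/k), σ z = -z := by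
  have hneg : (-z) ^ 2 = algebraMap k Ω c := by rw [neg_sq, hz]
  exact (Normal.minpoly_eq_iff_mem_orbit Ω).mp
    ((minpoly_eq_X_sq_sub_C hneg hc).trans (minpoly_eq_X_sq_sub_C hz hc).symm)

end Quadratic

section Conjugates

variable {F L : Type*} [Field F] [Field L] [Algebra F L]

theorem AlgEquiv.apply_eq_of_mem_adjoin {S : Set L} {g h : Gal(L/F)} (hgh : ∀ s ∈ S, g s = h s)
    {w : L} (hw : w ∈ adjoin F S) : g w = h w :=
  DFunLike.congr_fun (algHom_ext_of_eq_adjoin F rfl (φ₁ := (g : L →ₐ[F] L).comp (adjoin F S).val)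
    (φ₂ := (h : L →ₐ[F] L).comp (adjoin F S).val) hgh) ⟨w, hw⟩

theorem normalClosure_adjoin_le_iff [Normal F L] {S : Set L} {W : IntermediateField F L} :
    normalClosure F (adjoin F S) L ≤ W ↔ ∀ σ : Gal(L/F), ∀ s ∈ S, σ s ∈ W := by
  simp only [normalClosure_def'', iSup_le_iff, adjoin_map, adjoin_le_iff, Set.image_subset_iff]
  rfl

theorem apply_mem_normalClosure (E : IntermediateField F L) (σ : Gal(L/F)) {w : L} (hw : w ∈ E) :
    σ w ∈ normalClosure F E L :=
  ((σ : L →ₐ[F] L).comp E.val).fieldRange_le_normalClosure ⟨⟨w, hw⟩, rfl⟩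

theorem restrictNormalHom_adjoin_eq_iff {S : Set L} [Normal F (adjoin F S)] {g h : Gal(L/F)} :
    AlgEquiv.restrictNormalHom (adjoin F S) g = AlgEquiv.restrictNormalHom (adjoin F S) h ↔
      ∀ s ∈ S, g s = h s := by
  refine ⟨fun hgh s hs => ?_, fun hgh => AlgEquiv.ext fun w => Subtype.ext ?_⟩
  · simpa [AlgEquiv.restrictNormalHom_apply] using
      congrArg (fun σ => (σ ⟨s, subset_adjoin F S hs⟩ : L)) hgh
  · simpa [AlgEquiv.restrictNormalHom_apply] using AlgEquiv.apply_eq_of_mem_adjoin hgh w.2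

theorem card_gal_adjoin_eq_finrank [CharZero F] [Algebra.IsAlgebraic F L] (S : Set L) [Finite S]
    [Normal F (adjoin F S)] : Nat.card Gal(adjoin F S/F) = Module.finrank F (adjoin F S) :=
  have : FiniteDimensional F (adjoin F S) :=
    finiteDimensional_adjoin fun _ _ => Algebra.IsIntegral.isIntegral _
  have : IsGalois F (adjoin F S) := ⟨⟩
  IsGalois.card_aut_eq_finrank F (adjoin F S)

theorem IntermediateField.isSquare_mk_iff (E : IntermediateField F L) {c : L} (hc : c ∈ E) :
    IsSquare (⟨c, hc⟩ : E) ↔ ∃ w ∈ E, w ^ 2 = c :=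
  ⟨fun ⟨r, hr⟩ => ⟨r, r.2, by simpa [sq] using (congrArg Subtype.val hr).symm⟩,
    fun ⟨w, hw, hwc⟩ => ⟨⟨w, hw⟩, Subtype.ext (by simp [← hwc, sq])⟩⟩

theorem finrank_adjoin_insert_of_sq_mem (S : Set L) {z : L} (hz : z ^ 2 ∈ adjoin F S)
    (hns : ¬∃ w ∈ adjoin F S, w ^ 2 = z ^ 2) :
    Module.finrank F (adjoin F (insert z S)) = Module.finrank F (adjoin F S) * 2 := by
  have h2 : Module.finrank (adjoin F S) (adjoin (adjoin F S) {z}) = 2 :=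
    finrank_adjoin_of_sq_eq_algebraMap (c := ⟨z ^ 2, hz⟩) rfl ((isSquare_mk_iff _ hz).not.mpr hns)
  rw [← Set.union_singleton, ← adjoin_adjoin_left, ← h2]
  exact (Module.finrank_mul_finrank F (adjoin F S) (adjoin (adjoin F S) {z})).symm

theorem nonempty_gal_adjoin_mulEquiv_dihedralGroup {x y z : L} [Normal F (adjoin F {x, y, z})]
    (hcard : Nat.card Gal(adjoin F {x, y, z}/F) = 8) (hx : x ≠ -x) (hy : y ≠ -y) (hz : z ≠ -z)
    {r s : Gal(L/F)} (hrx : r x = -x) (hry : r y = z) (hrz : r z = -y)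
    (hsx : s x = x) (hsy : s y = y) (hsz : s z = -z) :
    Nonempty (Gal(adjoin F {x, y, z}/F) ≃* DihedralGroup 4) := by
  have : Finite Gal(adjoin F {x, y, z}/F) := Nat.finite_of_card_ne_zero (by omega)
  set res := AlgEquiv.restrictNormalHom (F := F) (K₁ := L) (adjoin F {x, y, z})
  have res_eq_iff (g h : Gal(L/F)) : res g = res h ↔ g x = h x ∧ g y = h y ∧ g z = h z := by
    simp [res, restrictNormalHom_adjoin_eq_iff]
  have hr2 : res r ^ 2 ≠ 1 := by
    rw [← map_pow, ← map_one res, Ne, res_eq_iff]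
    simp [sq, hrx, hry, hrz, hy.symm]
  have hr4 : res r ^ 2 ^ 2 = 1 := by
    rw [← map_pow, ← map_one res, res_eq_iff]
    simp [pow_succ, hrx, hry, hrz]
  have hord : orderOf (res r) = 4 :=
    orderOf_eq_prime_pow (p := 2) (n := 1) (by simpa using hr2) hr4
  refine nonempty_mulEquiv_dihedralGroup hcard hord (s := res s) ?_ ?_ ?_
  · rw [← map_pow, ← map_one res, res_eq_iff]
    simp [sq, hsx, hsy, hsz]
  · rw [← map_mul, ← map_pow, ← map_one res, res_eq_iff]
    simp [sq, hrx, hry, hrz, hsx, hsy, hsz]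
  · simp only [mem_zpowers_iff_mem_range_orderOf, hord, Finset.mem_image, Finset.mem_range,
      not_exists, not_and]
    intro k hk
    rw [← map_pow, res_eq_iff]
    interval_cases k <;> simp [pow_succ, hrx, hry, hrz, hsx, hsy, hsz, hx.symm, hy.symm, hz]

end Conjugates

section QuarticField

variable {K Ω : Type*} [Field K] [Field Ω] [Algebra K Ω] {d : K} {x α y : Ω} {Φ : Gal(Ω/K)}

theorem apply_mem_adjoin_of_apply_eq_neg (hΦ : Φ x = -x) {w : Ω} (hw : w ∈ K⟮x⟯) :
    Φ w ∈ K⟮x⟯ := by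
  have hmap : Φ w ∈ K⟮x⟯.map (Φ : Ω →ₐ[K] Ω) := ⟨w, hw, rfl⟩
  rw [adjoin_map, Set.image_singleton, AlgEquiv.coe_toAlgHom, hΦ] at hmap
  exact adjoin_simple_le_iff.mpr (neg_mem (mem_adjoin_simple_self K x)) hmap

theorem apply_apply_eq_of_mem_adjoin (hΦ : Φ x = -x) {w : Ω} (hw : w ∈ K⟮x⟯) : Φ (Φ w) = w :=
  AlgEquiv.apply_eq_of_mem_adjoin (g := Φ * Φ) (h := 1) (by simp [hΦ]) hw

theorem apply_eq_pm_self_or_pm_conj (hx : x ^ 2 = algebraMap K Ω d) (hαE : α ∈ K⟮x⟯)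
    (hy : y ^ 2 = α) (hΦ : Φ x = -x) (g : Gal(Ω/K)) :
    (g y = y ∨ g y = -y) ∨ (g y = Φ y ∨ g y = -Φ y) := by
  simp only [← sq_eq_sq_iff_eq_or_eq_neg, ← map_pow, hy]
  rcases g.apply_eq_or_eq_neg_of_sq_eq hx with h | h
  · exact .inl (AlgEquiv.apply_eq_of_mem_adjoin (h := 1) (by simp [h]) hαE)
  · exact .inr (AlgEquiv.apply_eq_of_mem_adjoin (by simp [h, hΦ]) hαE)

theorem normalClosure_sup_adjoin_eq [Normal K Ω] (hx : x ^ 2 = algebraMap K Ω d)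
    (hαE : α ∈ K⟮x⟯) (hy : y ^ 2 = α) (hΦ : Φ x = -x) :
    normalClosure K ↥(K⟮x⟯ ⊔ K⟮y⟯) Ω = adjoin K {x, y, Φ y} := by
  rw [← adjoin_union, Set.singleton_union]
  have hmem (w : Ω) (hw : w ∈ ({x, y, Φ y} : Set Ω)) :
      w ∈ adjoin K {x, y, Φ y} ∧ -w ∈ adjoin K {x, y, Φ y} :=
    ⟨subset_adjoin K _ hw, neg_mem (subset_adjoin K _ hw)⟩
  refine le_antisymm (normalClosure_adjoin_le_iff.mpr ?_) (adjoin_le_iff.mpr ?_)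
  · rintro g s (rfl | rfl)
    · rcases g.apply_eq_or_eq_neg_of_sq_eq hx with h | h <;> rw [h]
      exacts [(hmem s (by simp)).1, (hmem s (by simp)).2]
    · rcases apply_eq_pm_self_or_pm_conj hx hαE hy hΦ g with (h | h) | (h | h) <;> rw [h]
      exacts [(hmem s (by simp)).1, (hmem s (by simp)).2, (hmem _ (by simp)).1,
        (hmem _ (by simp)).2]
  · rintro s (rfl | rfl | rfl)
    · exact le_normalClosure _ (subset_adjoin K _ (by simp))
    · exact le_normalClosure _ (subset_adjoin K _ (by simp))
    · exact apply_mem_normalClosure _ Φ (subset_adjoin K _ (by simp))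

theorem finrank_adjoin_pair (hx : x ^ 2 = algebraMap K Ω d) (hd : ¬IsSquare d)
    (hαE : α ∈ K⟮x⟯) (hα : ¬∃ β ∈ K⟮x⟯, β ^ 2 = α) (hy : y ^ 2 = α) :
    Module.finrank K (adjoin K {x, y}) = 4 := by
  rw [Set.pair_comm, finrank_adjoin_insert_of_sq_mem {x} (hy ▸ hαE) (hy ▸ hα),
    finrank_adjoin_of_sq_eq_algebraMap hx hd]

theorem algebraMap_norm_eq_mul_apply [CharZero K] [IsAlgClosed Ω]
    (hx : x ^ 2 = algebraMap K Ω d) (hd : ¬IsSquare d) (hΦ : Φ x = -x) (w : K⟮x⟯) :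
    algebraMap K Ω (Algebra.norm K w) = w * Φ w := by
  have : CharZero Ω := charZero_of_injective_algebraMap (algebraMap K Ω).injective
  have hx0 : x ≠ -x := self_eq_neg.not.mpr (ne_zero_of_sq_eq_algebraMap hx hd)
  have : FiniteDimensional K K⟮x⟯ := adjoin.finiteDimensional (isIntegral_of_sq_eq_algebraMap hx)
  let ι := K⟮x⟯.val
  have hne : ι ≠ (Φ : Ω →ₐ[K] Ω).comp ι := fun h =>
    hx0 (by simpa [ι, hΦ] using DFunLike.congr_fun h (AdjoinSimple.gen K x))
  have huniv : (Finset.univ : Finset (K⟮x⟯ →ₐ[K] Ω)) = {ι, (Φ : Ω →ₐ[K] Ω).comp ι} :=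
    (Finset.eq_univ_of_card _ (by
      rw [Finset.card_pair hne, AlgHom.card, finrank_adjoin_of_sq_eq_algebraMap hx hd])).symm
  rw [Algebra.norm_eq_prod_embeddings K Ω, huniv, Finset.prod_pair hne]
  rfl

theorem sq_mul_apply_eq_algebraMap_norm [CharZero K] [IsAlgClosed Ω]
    (hx : x ^ 2 = algebraMap K Ω d) (hd : ¬IsSquare d) (hαE : α ∈ K⟮x⟯) (hy : y ^ 2 = α)
    (hΦ : Φ x = -x) : (y * Φ y) ^ 2 = algebraMap K Ω (Algebra.norm K (⟨α, hαE⟩ : K⟮x⟯)) := by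
  rw [algebraMap_norm_eq_mul_apply hx hd hΦ, mul_pow, ← map_pow, hy]

theorem normalClosure_sup_adjoin_eq_of_mem [Normal K Ω] (hx : x ^ 2 = algebraMap K Ω d)
    (hαE : α ∈ K⟮x⟯) (hy : y ^ 2 = α) (hΦ : Φ x = -x) (hΦy : Φ y ∈ adjoin K {x, y}) :
    normalClosure K ↥(K⟮x⟯ ⊔ K⟮y⟯) Ω = adjoin K {x, y} := by
  rw [normalClosure_sup_adjoin_eq hx hαE hy hΦ]
  refine le_antisymm (adjoin_le_iff.mpr ?_) (adjoin.mono _ _ _ (by simp [Set.subset_def]))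
  rintro s (rfl | rfl | rfl)
  exacts [subset_adjoin K _ (by simp), subset_adjoin K _ (by simp), hΦy]

/-- A square root of `Φ α` in `K(x, y)` would lie in `K(x)` or in `K(x) y`, making `α` a square
in `K(x)` or `N(α)` the square of an element of `K ∪ K x`. -/
theorem not_exists_sq_eq_apply_sq [CharZero K] [IsAlgClosed Ω] (hx : x ^ 2 = algebraMap K Ω d)
    (hd : ¬IsSquare d) (hαE : α ∈ K⟮x⟯) (hα : ¬∃ β ∈ K⟮x⟯, β ^ 2 = α) (hy : y ^ 2 = α)
    (hΦ : Φ x = -x) (hN : ¬IsSquare (Algebra.norm K (⟨α, hαE⟩ : K⟮x⟯)) ∧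
      ¬∃ c : K, Algebra.norm K (⟨α, hαE⟩ : K⟮x⟯) = d * c ^ 2) :
    ¬∃ w ∈ adjoin K {x, y}, w ^ 2 = (Φ y) ^ 2 := by
  rintro ⟨w, hw, hw2⟩
  rw [← Set.singleton_union, ← adjoin_adjoin_left] at hw
  have hΦα : Φ α ∈ K⟮x⟯ := apply_mem_adjoin_of_apply_eq_neg hΦ hαE
  have hw' : w ∈ adjoin K⟮x⟯ {y} := hw
  have hαns : ¬IsSquare (⟨α, hαE⟩ : K⟮x⟯) := (isSquare_mk_iff _ hαE).not.mpr hα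
  have hw2' : w ^ 2 = algebraMap K⟮x⟯ Ω ⟨Φ α, hΦα⟩ := by rw [hw2, ← map_pow, hy]; rfl
  have hy' : y ^ 2 = algebraMap K⟮x⟯ Ω ⟨α, hαE⟩ := hy
  obtain ⟨a, rfl⟩ | ⟨a, rfl⟩ := mem_range_or_mem_range_mul_of_sq_eq two_ne_zero hy' hαns hw' hw2'
  · have ha : (a : Ω) ^ 2 = Φ α := by rw [← hy, map_pow]; exact hw2
    refine hα ⟨Φ a, apply_mem_adjoin_of_apply_eq_neg hΦ a.2, ?_⟩
    rw [← map_pow, ha, apply_apply_eq_of_mem_adjoin hΦ hαE]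
  · have ha : (a : Ω) ^ 2 * α = Φ α := by rw [← hy, map_pow, ← mul_pow]; exact hw2
    have hv : ((a : Ω) * α) ^ 2 = algebraMap K Ω (Algebra.norm K (⟨α, hαE⟩ : K⟮x⟯)) := by
      rw [algebraMap_norm_eq_mul_apply hx hd hΦ]
      linear_combination α * ha
    obtain ⟨t, ht⟩ | ⟨t, ht⟩ := mem_range_or_mem_range_mul_of_sq_eq two_ne_zero hx hd
      (mul_mem a.2 hαE) hv
    · exact hN.1 ⟨t, FaithfulSMul.algebraMap_injective K Ω (by simp [← hv, ht, sq])⟩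
    · exact hN.2 ⟨t, FaithfulSMul.algebraMap_injective K Ω
        (by simp [← hv, ht, mul_pow, hx]; ring)⟩

theorem nonempty_gal_normalClosure_mulEquiv_kleinFour [CharZero K] [IsAlgClosed Ω] [Normal K Ω]
    (hx : x ^ 2 = algebraMap K Ω d) (hd : ¬IsSquare d) (hαE : α ∈ K⟮x⟯)
    (hα : ¬∃ β ∈ K⟮x⟯, β ^ 2 = α) (hy : y ^ 2 = α) (hΦ : Φ x = -x)
    (hN : IsSquare (Algebra.norm K (⟨α, hαE⟩ : K⟮x⟯))) :
    Nonempty (Gal(normalClosure K ↥(K⟮x⟯ ⊔ K⟮y⟯) Ω/K) ≃* Multiplicative (ZMod 2 × ZMod 2)) := by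
  have hy0 : y ≠ 0 := by rintro rfl; exact hα ⟨0, zero_mem _, by simp [← hy]⟩
  obtain ⟨c, hΦy⟩ : ∃ c : K, Φ y = algebraMap K Ω c / y := by
    obtain ⟨c, hc⟩ := hN
    have := sq_mul_apply_eq_algebraMap_norm hx hd hαE hy hΦ
    rw [hc, map_mul, ← sq, sq_eq_sq_iff_eq_or_eq_neg] at this
    rcases this with h | h
    exacts [⟨c, by rw [← h]; field_simp⟩, ⟨-c, by rw [map_neg, ← h]; field_simp⟩]
  have hc0 : algebraMap K Ω c ≠ 0 := fun h => by simp [h, hy0] at hΦy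
  have hLN := normalClosure_sup_adjoin_eq_of_mem hx hαE hy hΦ (by
    rw [hΦy]; exact div_mem (IntermediateField.algebraMap_mem _ c) (subset_adjoin K _ (by simp)))
  have : Normal K (adjoin K {x, y}) := hLN ▸ normalClosure.normal K _ Ω
  rw [hLN]
  have : IsKleinFour Gal(adjoin K {x, y}/K) := by
    refine .of_card_eq_four
      (by rw [card_gal_adjoin_eq_finrank, finrank_adjoin_pair hx hd hαE hα hy]) fun σ => ?_
    obtain ⟨g, rfl⟩ := AlgEquiv.restrictNormalHom_surjective (K₁ := adjoin K {x, y}) Ω σ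
    rw [← map_pow, ← map_one (AlgEquiv.restrictNormalHom (K₁ := Ω) (adjoin K {x, y})),
      restrictNormalHom_adjoin_eq_iff]
    -- `g y` is `±y` or `±c / y`, and both of these maps are involutions
    rintro s (rfl | rfl)
    · rcases g.apply_eq_or_eq_neg_of_sq_eq hx with h | h <;> simp [sq, h]
    · rcases apply_eq_pm_self_or_pm_conj hx hαE hy hΦ g with (h | h) | (h | h) <;>
        simp [sq, h, hΦy, hc0, div_neg]
  exact IsKleinFour.nonempty_mulEquiv

theorem nonempty_gal_normalClosure_mulEquiv_zmod_four [CharZero K] [IsAlgClosed Ω] [Normal K Ω]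
    (hx : x ^ 2 = algebraMap K Ω d) (hd : ¬IsSquare d) (hαE : α ∈ K⟮x⟯)
    (hα : ¬∃ β ∈ K⟮x⟯, β ^ 2 = α) (hy : y ^ 2 = α) (hΦ : Φ x = -x)
    (hN : ∃ c : K, Algebra.norm K (⟨α, hαE⟩ : K⟮x⟯) = d * c ^ 2) :
    Nonempty (Gal(normalClosure K ↥(K⟮x⟯ ⊔ K⟮y⟯) Ω/K) ≃* Multiplicative (ZMod 4)) := by
  have hy0 : y ≠ 0 := by rintro rfl; exact hα ⟨0, zero_mem _, by simp [← hy]⟩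
  obtain ⟨c, hΦy⟩ : ∃ c : K, Φ y = algebraMap K Ω c * x / y := by
    obtain ⟨c, hc⟩ := hN
    have := sq_mul_apply_eq_algebraMap_norm hx hd hαE hy hΦ
    rw [hc, map_mul, map_pow, ← hx, ← mul_pow, sq_eq_sq_iff_eq_or_eq_neg] at this
    rcases this with h | h
    exacts [⟨c, by rw [mul_comm _ x, ← h]; field_simp⟩,
      ⟨-c, by rw [map_neg, neg_mul, mul_comm _ x, ← h]; field_simp⟩]
  have hcx : algebraMap K Ω c * x ≠ 0 := fun h => by simp [h, hy0] at hΦy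
  have hLN := normalClosure_sup_adjoin_eq_of_mem hx hαE hy hΦ (by
    rw [hΦy]
    exact div_mem (mul_mem (IntermediateField.algebraMap_mem _ c) (subset_adjoin K _ (by simp)))
      (subset_adjoin K _ (by simp)))
  have : Normal K (adjoin K {x, y}) := hLN ▸ normalClosure.normal K _ Ω
  rw [hLN]
  set res := AlgEquiv.restrictNormalHom (F := K) (K₁ := Ω) (adjoin K {x, y})
  refine nonempty_mulEquiv_zmod_of_pow_ne_one (p := 2) (k := 1) (g := res Φ)
    (by rw [card_gal_adjoin_eq_finrank, finrank_adjoin_pair hx hd hαE hα hy]; rfl) ?_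
  rw [← map_pow, ← map_one res, Ne, restrictNormalHom_adjoin_eq_iff]
  intro h
  have : CharZero Ω := charZero_of_injective_algebraMap (algebraMap K Ω).injective
  simpa [sq, hΦy, hΦ, neg_div, div_div_cancel₀ hcx, neg_eq_self, hy0] using h y (by simp)

theorem nonempty_gal_normalClosure_mulEquiv_dihedralGroup [CharZero K] [IsAlgClosed Ω]
    [Normal K Ω] (hx : x ^ 2 = algebraMap K Ω d) (hd : ¬IsSquare d) (hαE : α ∈ K⟮x⟯)
    (hα : ¬∃ β ∈ K⟮x⟯, β ^ 2 = α) (hy : y ^ 2 = α) (hΦ : Φ x = -x)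
    (hN : ¬IsSquare (Algebra.norm K (⟨α, hαE⟩ : K⟮x⟯)) ∧
      ¬∃ c : K, Algebra.norm K (⟨α, hαE⟩ : K⟮x⟯) = d * c ^ 2) :
    Nonempty (Gal(normalClosure K ↥(K⟮x⟯ ⊔ K⟮y⟯) Ω/K) ≃* DihedralGroup 4) := by
  have : CharZero Ω := charZero_of_injective_algebraMap (algebraMap K Ω).injective
  have hy0 : y ≠ 0 := by rintro rfl; exact hα ⟨0, zero_mem _, by simp [← hy]⟩
  have hns := not_exists_sq_eq_apply_sq hx hd hαE hα hy hΦ hN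
  have hmem : (Φ y) ^ 2 ∈ adjoin K {x, y} := by
    rw [← map_pow, hy]
    exact adjoin.mono _ _ _ (by simp) (apply_mem_adjoin_of_apply_eq_neg hΦ hαE)
  obtain ⟨ψ, hψ⟩ := exists_algEquiv_apply_eq_neg (k := adjoin K {x, y}) (Ω := Ω) (z := Φ y)
    (c := ⟨_, hmem⟩) rfl ((isSquare_mk_iff _ hmem).not.mpr hns)
  let s := ψ.restrictScalars K
  have hs {w : Ω} (hw : w ∈ adjoin K {x, y}) : s w = w := ψ.commutes ⟨w, hw⟩
  have hsx : s x = x := hs (subset_adjoin K _ (by simp))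
  have hsy : s y = y := hs (subset_adjoin K _ (by simp))
  obtain ⟨r, hrx, hry, hrz⟩ : ∃ r : Gal(Ω/K), r x = -x ∧ r y = Φ y ∧ r (Φ y) = -y := by
    have : Φ (Φ y) ^ 2 = y ^ 2 := by
      rw [← map_pow, ← map_pow, hy, apply_apply_eq_of_mem_adjoin hΦ hαE]
    rcases sq_eq_sq_iff_eq_or_eq_neg.mp this with h | h
    · exact ⟨Φ * s, by simp [hsx, hΦ], by simp [hsy], by simp [s, hψ, h]⟩
    · exact ⟨Φ, hΦ, rfl, h⟩
  have hLN := normalClosure_sup_adjoin_eq hx hαE hy hΦ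
  have : Normal K (adjoin K {x, y, Φ y}) := hLN ▸ normalClosure.normal K _ Ω
  rw [hLN]
  refine nonempty_gal_adjoin_mulEquiv_dihedralGroup ?_
    (self_eq_neg.not.mpr (ne_zero_of_sq_eq_algebraMap hx hd)) (self_eq_neg.not.mpr hy0)
    (self_eq_neg.not.mpr (by simpa using hy0)) hrx hry hrz hsx hsy hψ
  rw [card_gal_adjoin_eq_finrank, Set.pair_comm y, Set.insert_comm,
    finrank_adjoin_insert_of_sq_mem _ hmem hns, finrank_adjoin_pair hx hd hαE hα hy]

end QuarticField

theorem lem_GG_norm_conditions_general (K : Type) [Field K] [Algebra ℚ_[2] K]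
    (d : K) (hd : ¬ IsSquare d)
    (x : AlgebraicClosure K) (hx : x ^ 2 = algebraMap K (AlgebraicClosure K) d)
    (α : AlgebraicClosure K) (hαE : α ∈ K⟮x⟯)
    (hαns : ¬ ∃ β ∈ K⟮x⟯, β ^ 2 = α)
    (y : AlgebraicClosure K) (hy : y ^ 2 = α) :
    (IsSquare (Algebra.norm K (⟨α, hαE⟩ : K⟮x⟯)) →
        GalClosureGrpIso K (K⟮x⟯ ⊔ K⟮y⟯) (Multiplicative (ZMod 2 × ZMod 2))) ∧
    ((∃ c : K, Algebra.norm K (⟨α, hαE⟩ : K⟮x⟯) = d * c ^ 2) →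
        GalClosureGrpIso K (K⟮x⟯ ⊔ K⟮y⟯) (Multiplicative (ZMod 4))) ∧
    ((¬ IsSquare (Algebra.norm K (⟨α, hαE⟩ : K⟮x⟯)) ∧
        ¬ ∃ c : K, Algebra.norm K (⟨α, hαE⟩ : K⟮x⟯) = d * c ^ 2) →
        GalClosureGrpIso K (K⟮x⟯ ⊔ K⟮y⟯) (DihedralGroup 4)) := by
  have : CharZero K := charZero_of_injective_algebraMap (algebraMap ℚ_[2] K).injective
  obtain ⟨Φ, hΦ⟩ := exists_algEquiv_apply_eq_neg hx hd
  exact ⟨nonempty_gal_normalClosure_mulEquiv_kleinFour hx hd hαE hαns hy hΦ,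
    nonempty_gal_normalClosure_mulEquiv_zmod_four hx hd hαE hαns hy hΦ,
    nonempty_gal_normalClosure_mulEquiv_dihedralGroup hx hd hαE hαns hy hΦ⟩

/-- Lemma 4.5 (Monnet): for `E = K(√d)` and `L = E(√α)`, the Galois closure group of
`L/K` is `V₄` if `N_{E/K}(α) ∈ K^{×2}`, `C₄` if `N_{E/K}(α) ∈ d·K^{×2}`, and `D₄`
otherwise. -/
theorem lem_GG_norm_conditions (K : Type) [Field K] [Algebra ℚ_[2] K]
    [FiniteDimensional ℚ_[2] K]
    (d : K) (hd0 : d ≠ 0) (hd : ¬ IsSquare d)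
    (x : AlgebraicClosure K) (hx : x ^ 2 = algebraMap K (AlgebraicClosure K) d)
    (α : AlgebraicClosure K) (hαE : α ∈ K⟮x⟯) (hα0 : α ≠ 0)
    (hαns : ¬ ∃ β ∈ K⟮x⟯, β ^ 2 = α)
    (y : AlgebraicClosure K) (hy : y ^ 2 = α) :
    (IsSquare (Algebra.norm K (⟨α, hαE⟩ : K⟮x⟯)) →
        GalClosureGrpIso K (K⟮x⟯ ⊔ K⟮y⟯) (Multiplicative (ZMod 2 × ZMod 2))) ∧
    ((∃ c : K, Algebra.norm K (⟨α, hαE⟩ : K⟮x⟯) = d * c ^ 2) →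
        GalClosureGrpIso K (K⟮x⟯ ⊔ K⟮y⟯) (Multiplicative (ZMod 4))) ∧
    ((¬ IsSquare (Algebra.norm K (⟨α, hαE⟩ : K⟮x⟯)) ∧
        ¬ ∃ c : K, Algebra.norm K (⟨α, hαE⟩ : K⟮x⟯) = d * c ^ 2) →
        GalClosureGrpIso K (K⟮x⟯ ⊔ K⟮y⟯) (DihedralGroup 4)) :=
  lem_GG_norm_conditions_general K d hd x hx α hαE hαns y hy
end
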